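/- arXiv:1811.00999 — 2 statements merged into one kernel-verified Lean document; each statement's English description precedes it below -/
import Mathlib

section
/- (Steiner point total movement bound) Let s(K) = d·∫_{S^{d−1}} h_K(θ)·θ dθ (integral over the uniform probability measure) be the Steiner point of a convex body K ⊂ ℝ^d. If B₁ = K₀ ⊇ K₁ ⊇ … ⊇ K_T is a nested sequence of convex bodies with K₀ the unit ball, then ∑_{t=0}^{T−1} ‖s(K_t) − s(K_{t+1})‖₂ ≤ d. -/
open MeasureTheory Metric Set

/-- Support function of `K` in direction `θ`. -/
noncomputable def suppFn {d : ℕ} (K : Set (EuclideanSpace ℝ (Fin d)))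
    (θ : EuclideanSpace ℝ (Fin d)) : ℝ :=
  sSup ((fun x => @inner ℝ _ _ θ x) '' K)

/-- Steiner point `s(K) = d·∫_{S^{d−1}} h_K(θ)·θ dθ`,
with `μ` the uniform probability measure on the sphere. -/
noncomputable def steinerPt {d : ℕ} (μ : Measure (EuclideanSpace ℝ (Fin d)))
    (K : Set (EuclideanSpace ℝ (Fin d))) : EuclideanSpace ℝ (Fin d) :=
  (d : ℝ) • ∫ θ, suppFn K θ • θ ∂μ

section aux

variable {d : ℕ}


lemma bddAbove_img (θ : (EuclideanSpace ℝ (Fin d))) {K : Set (EuclideanSpace ℝ (Fin d))} (hK : IsCompact K) :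
    BddAbove ((fun x => @inner ℝ _ _ θ x) '' K) :=
  (hK.image (continuous_const.inner continuous_id)).bddAbove

lemma suppFn_mono {K L : Set (EuclideanSpace ℝ (Fin d))} (hKL : K ⊆ L) (hne : K.Nonempty) (hL : IsCompact L) (θ : (EuclideanSpace ℝ (Fin d))) :
    suppFn K θ ≤ suppFn L θ :=
  csSup_le_csSup (bddAbove_img θ hL) (hne.image _) (image_mono hKL)

lemma le_suppFn {K : Set (EuclideanSpace ℝ (Fin d))} (hK : IsCompact K) {x : (EuclideanSpace ℝ (Fin d))} (hx : x ∈ K) (θ : (EuclideanSpace ℝ (Fin d))) :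
    @inner ℝ _ _ θ x ≤ suppFn K θ :=
  le_csSup (bddAbove_img θ hK) ⟨x, hx, rfl⟩

lemma suppFn_le {K : Set (EuclideanSpace ℝ (Fin d))} (hne : K.Nonempty) {R : ℝ} (hKR : K ⊆ closedBall 0 R) (θ : (EuclideanSpace ℝ (Fin d))) :
    suppFn K θ ≤ R * ‖θ‖ := by
  apply csSup_le (hne.image _)
  rintro y ⟨x, hx, rfl⟩
  have hx' : ‖x‖ ≤ R := mem_closedBall_zero_iff.mp (hKR hx)
  have := real_inner_le_norm θ x
  nlinarith [norm_nonneg θ]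

lemma abs_suppFn_le {K : Set (EuclideanSpace ℝ (Fin d))} (hK : IsCompact K) (hne : K.Nonempty) {R : ℝ}
    (hKR : K ⊆ closedBall 0 R) (θ : (EuclideanSpace ℝ (Fin d))) : |suppFn K θ| ≤ R * ‖θ‖ := by
  obtain ⟨x, hx⟩ := hne
  refine abs_le.mpr ⟨?_, suppFn_le ⟨x, hx⟩ hKR θ⟩
  have h1 := le_suppFn hK hx θ
  have h2 : |@inner ℝ _ _ θ x| ≤ ‖θ‖ * ‖x‖ := abs_real_inner_le_norm θ x
  have hx' : ‖x‖ ≤ R := mem_closedBall_zero_iff.mp (hKR hx)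
  have := abs_le.mp h2
  nlinarith [norm_nonneg θ]

lemma suppFn_lip {K : Set (EuclideanSpace ℝ (Fin d))} (hK : IsCompact K) (hne : K.Nonempty) {R : ℝ} (hR : 0 ≤ R)
    (hKR : K ⊆ closedBall 0 R) : LipschitzWith ⟨R, hR⟩ (suppFn K) := by
  apply LipschitzWith.of_dist_le_mul
  intro a b
  have key : ∀ u v : (EuclideanSpace ℝ (Fin d)), suppFn K u - suppFn K v ≤ R * ‖u - v‖ := by
    intro u v
    rw [sub_le_iff_le_add]
    apply csSup_le (hne.image _)
    rintro y ⟨x, hx, rfl⟩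
    have h1 : @inner ℝ _ _ u x = @inner ℝ _ _ v x + @inner ℝ _ _ (u - v) x := by
      rw [inner_sub_left]; ring
    have h2 := le_suppFn hK hx v
    have h3 : @inner ℝ _ _ (u - v) x ≤ ‖u - v‖ * ‖x‖ := real_inner_le_norm _ _
    have hx' : ‖x‖ ≤ R := mem_closedBall_zero_iff.mp (hKR hx)
    have h4 : ‖u - v‖ * ‖x‖ ≤ R * ‖u - v‖ := by nlinarith [norm_nonneg (u - v)]
    linarith
  rw [Real.dist_eq, dist_eq_norm]
  rw [abs_sub_le_iff]
  refine ⟨key a b, ?_⟩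
  rw [norm_sub_rev]
  exact key b a

lemma suppFn_continuous {K : Set (EuclideanSpace ℝ (Fin d))} (hK : IsCompact K) (hne : K.Nonempty) :
    Continuous (suppFn K) := by
  obtain ⟨r, hr⟩ := hK.isBounded.subset_closedBall 0
  have hr' : K ⊆ closedBall 0 (max r 0) :=
    hr.trans (closedBall_subset_closedBall (le_max_left _ _))
  exact (suppFn_lip hK hne (le_max_right r 0) hr').continuous

variable {μ : Measure (EuclideanSpace ℝ (Fin d))} [IsProbabilityMeasure μ]

lemma ae_sphere (hsupp : μ (Metric.sphere (0 : (EuclideanSpace ℝ (Fin d))) 1)ᶜ = 0) : ∀ᵐ θ ∂μ, ‖θ‖ = 1 := by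
  have h : Metric.sphere (0 : (EuclideanSpace ℝ (Fin d))) 1 ∈ ae μ := MeasureTheory.mem_ae_iff.mpr hsupp
  filter_upwards [h] with θ hθ
  exact mem_sphere_zero_iff_norm.mp hθ

lemma integrable_id' (hsupp : μ (Metric.sphere (0 : (EuclideanSpace ℝ (Fin d))) 1)ᶜ = 0) :
    Integrable (fun θ : (EuclideanSpace ℝ (Fin d)) => θ) μ := by
  refine Integrable.mono' (integrable_const 1) continuous_id.aestronglyMeasurable ?_
  filter_upwards [ae_sphere hsupp] with θ hθ
  simp [hθ]

lemma integrable_suppFn {K : Set (EuclideanSpace ℝ (Fin d))} (hK : IsCompact K) (hne : K.Nonempty)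
    (hsupp : μ (Metric.sphere (0 : (EuclideanSpace ℝ (Fin d))) 1)ᶜ = 0) :
    Integrable (fun θ => suppFn K θ) μ := by
  obtain ⟨r, hr⟩ := hK.isBounded.subset_closedBall 0
  have hr' : K ⊆ closedBall 0 (max r 0) :=
    hr.trans (closedBall_subset_closedBall (le_max_left _ _))
  refine Integrable.mono' (integrable_const (max r 0))
    (suppFn_continuous hK hne).aestronglyMeasurable ?_
  filter_upwards [ae_sphere hsupp] with θ hθ
  have := abs_suppFn_le hK hne hr' θ
  rw [hθ, mul_one] at this
  simpa using this

lemma integrable_suppFn_smul {K : Set (EuclideanSpace ℝ (Fin d))} (hK : IsCompact K) (hne : K.Nonempty)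
    (hsupp : μ (Metric.sphere (0 : (EuclideanSpace ℝ (Fin d))) 1)ᶜ = 0) :
    Integrable (fun θ => suppFn K θ • θ) μ := by
  obtain ⟨r, hr⟩ := hK.isBounded.subset_closedBall 0
  have hr' : K ⊆ closedBall 0 (max r 0) :=
    hr.trans (closedBall_subset_closedBall (le_max_left _ _))
  refine Integrable.mono' (integrable_const (max r 0))
    ((suppFn_continuous hK hne).smul continuous_id).aestronglyMeasurable ?_
  filter_upwards [ae_sphere hsupp] with θ hθ
  rw [norm_smul, hθ, mul_one]
  have := abs_suppFn_le hK hne hr' θ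
  rw [hθ, mul_one] at this
  simpa using this

lemma norm_I_sub (hsupp : μ (Metric.sphere (0 : (EuclideanSpace ℝ (Fin d))) 1)ᶜ = 0)
    {K K' : Set (EuclideanSpace ℝ (Fin d))} (hK : IsCompact K) (hK' : IsCompact K') (hne' : K'.Nonempty)
    (hsub : K' ⊆ K) :
    ‖(∫ θ, suppFn K θ • θ ∂μ) - ∫ θ, suppFn K' θ • θ ∂μ‖ ≤
      (∫ θ, suppFn K θ ∂μ) - ∫ θ, suppFn K' θ ∂μ := by
  have hne : K.Nonempty := hne'.mono hsub
  rw [← integral_sub (integrable_suppFn_smul hK hne hsupp)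
    (integrable_suppFn_smul hK' hne' hsupp),
    ← integral_sub (integrable_suppFn hK hne hsupp) (integrable_suppFn hK' hne' hsupp)]
  calc ‖∫ θ, (suppFn K θ • θ - suppFn K' θ • θ) ∂μ‖
      ≤ ∫ θ, ‖suppFn K θ • θ - suppFn K' θ • θ‖ ∂μ := norm_integral_le_integral_norm _
    _ = ∫ θ, (suppFn K θ - suppFn K' θ) ∂μ := by
        apply integral_congr_ae
        filter_upwards [ae_sphere hsupp] with θ hθ
        rw [← sub_smul, norm_smul, hθ, mul_one]
        have hm := suppFn_mono hsub hne' hK θ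
        rw [Real.norm_eq_abs, abs_of_nonneg (sub_nonneg.mpr hm)]

lemma integral_id_eq_zero (hsupp : μ (Metric.sphere (0 : (EuclideanSpace ℝ (Fin d))) 1)ᶜ = 0)
    (hinv : ∀ g : (EuclideanSpace ℝ (Fin d)) ≃ₗᵢ[ℝ] (EuclideanSpace ℝ (Fin d)), Measure.map g μ = μ) :
    (∫ θ, θ ∂μ) = 0 := by
  have hg := hinv (LinearIsometryEquiv.neg ℝ)
  have hm : AEStronglyMeasurable (fun θ : (EuclideanSpace ℝ (Fin d)) => θ)
      (Measure.map (⇑(LinearIsometryEquiv.neg ℝ)) μ) := aestronglyMeasurable_id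
  have h1 := integral_map (f := fun θ : (EuclideanSpace ℝ (Fin d)) => θ)
    (LinearIsometryEquiv.neg ℝ).continuous.aemeasurable hm
  rw [hg] at h1
  have h1' : (∫ θ, θ ∂μ) = -∫ θ : (EuclideanSpace ℝ (Fin d)), θ ∂μ := by
    calc (∫ θ, θ ∂μ) = ∫ x, (LinearIsometryEquiv.neg ℝ) x ∂μ := h1
      _ = ∫ x : (EuclideanSpace ℝ (Fin d)), -x ∂μ :=
          integral_congr_ae (Filter.Eventually.of_forall fun x =>
            congrFun (LinearIsometryEquiv.coe_neg (R := ℝ)) x)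
      _ = -∫ x : (EuclideanSpace ℝ (Fin d)), x ∂μ := integral_neg _
  have h2 : (2 : ℝ) • (∫ θ, θ ∂μ) = 0 := by
    rw [two_smul]
    nth_rewrite 2 [h1']
    simp
  have := smul_eq_zero.mp h2
  simpa using this

end aux

/-- Steiner point total movement bound: for a nested sequence
`B₁ = K₀ ⊇ K₁ ⊇ … ⊇ K_T`, the Steiner point moves at most total distance `d`. -/
theorem steiner_total_movement_le_dim
    (d : ℕ) (μ : Measure (EuclideanSpace ℝ (Fin d)))
    [IsProbabilityMeasure μ]
    (hsupp : μ (Metric.sphere (0 : EuclideanSpace ℝ (Fin d)) 1)ᶜ = 0)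
    (hinv : ∀ g : EuclideanSpace ℝ (Fin d) ≃ₗᵢ[ℝ] EuclideanSpace ℝ (Fin d),
      Measure.map g μ = μ)
    (T : ℕ) (K : ℕ → Set (EuclideanSpace ℝ (Fin d)))
    (hK0 : K 0 = Metric.closedBall (0 : EuclideanSpace ℝ (Fin d)) 1)
    (hcpt : ∀ t ≤ T, IsCompact (K t)) (hconv : ∀ t ≤ T, Convex ℝ (K t))
    (hne : ∀ t ≤ T, (K t).Nonempty)
    (hnested : ∀ t, t + 1 ≤ T → K (t + 1) ⊆ K t) :
    ∑ t ∈ Finset.range T, ‖steinerPt μ (K t) - steinerPt μ (K (t + 1))‖ ≤ (d : ℝ) := by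
  set J : ℕ → ℝ := fun t => ∫ θ, suppFn (K t) θ ∂μ with hJ
  -- each step bound
  have step : ∀ t, t + 1 ≤ T →
      ‖steinerPt μ (K t) - steinerPt μ (K (t + 1))‖ ≤ (d : ℝ) * (J t - J (t + 1)) := by
    intro t ht
    show ‖(d : ℝ) • (∫ θ, suppFn (K t) θ • θ ∂μ) -
        (d : ℝ) • ∫ θ, suppFn (K (t+1)) θ • θ ∂μ‖ ≤ _
    rw [← smul_sub, norm_smul, Real.norm_natCast]
    apply mul_le_mul_of_nonneg_left _ (Nat.cast_nonneg d)
    exact norm_I_sub hsupp (hcpt t (le_of_lt ht)) (hcpt (t + 1) ht) (hne (t + 1) ht)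
      (hnested t ht)
  have hsum : ∑ t ∈ Finset.range T, ‖steinerPt μ (K t) - steinerPt μ (K (t + 1))‖ ≤
      (d : ℝ) * (J 0 - J T) := by
    calc ∑ t ∈ Finset.range T, ‖steinerPt μ (K t) - steinerPt μ (K (t + 1))‖
        ≤ ∑ t ∈ Finset.range T, (d : ℝ) * (J t - J (t + 1)) := by
          apply Finset.sum_le_sum
          intro t ht
          exact step t (Finset.mem_range.mp ht)
      _ = (d : ℝ) * ∑ t ∈ Finset.range T, (J t - J (t + 1)) := by
          rw [Finset.mul_sum]
      _ = (d : ℝ) * (J 0 - J T) := by rw [Finset.sum_range_sub' J T]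
  -- J 0 = 1
  have hJ0 : J 0 = 1 := by
    have : (fun θ => suppFn (K 0) θ) =ᵐ[μ] fun _ => (1 : ℝ) := by
      filter_upwards [ae_sphere hsupp] with θ hθ
      have hK0c : IsCompact (K 0) := hcpt 0 (Nat.zero_le T)
      have hsub : K 0 ⊆ closedBall 0 1 := hK0.le
      have hne0 : (K 0).Nonempty := hne 0 (Nat.zero_le T)
      have h1 : suppFn (K 0) θ ≤ 1 := by
        have := suppFn_le hne0 hsub θ
        rwa [hθ, one_mul] at this
      have h2 : (1 : ℝ) ≤ suppFn (K 0) θ := by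
        have hmem : θ ∈ K 0 := by
          rw [hK0, mem_closedBall_zero_iff, hθ]
        have := le_suppFn hK0c hmem θ
        rwa [real_inner_self_eq_norm_sq, hθ, one_pow] at this
      linarith
    rw [hJ]
    simp only []
    rw [integral_congr_ae this, integral_const, probReal_univ]
    simp
  -- J T ≥ 0
  have hJT : 0 ≤ J T := by
    obtain ⟨x₀, hx₀⟩ := hne T le_rfl
    have hintK : Integrable (fun θ => suppFn (K T) θ) μ :=
      integrable_suppFn (hcpt T le_rfl) (hne T le_rfl) hsupp
    have hintid : Integrable (fun θ : EuclideanSpace ℝ (Fin d) => θ) μ :=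
      integrable_id' hsupp
    have hinti : Integrable (fun θ : EuclideanSpace ℝ (Fin d) => @inner ℝ _ _ θ x₀) μ :=
      hintid.inner_const x₀
    have hzero : (∫ θ, @inner ℝ _ _ θ x₀ ∂μ) = 0 := by
      have : (∫ θ, @inner ℝ _ _ θ x₀ ∂μ) = ∫ θ, @inner ℝ _ _ x₀ θ ∂μ := by
        simp_rw [real_inner_comm]
      rw [this, integral_inner hintid, integral_id_eq_zero hsupp hinv, inner_zero_right]
    rw [← hzero]
    exact integral_mono hinti hintK (fun θ => le_suppFn (hcpt T le_rfl) hx₀ θ)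
  calc ∑ t ∈ Finset.range T, ‖steinerPt μ (K t) - steinerPt μ (K (t + 1))‖
      ≤ (d : ℝ) * (J 0 - J T) := hsum
    _ ≤ (d : ℝ) * 1 := by
        apply mul_le_mul_of_nonneg_left _ (Nat.cast_nonneg d)
        rw [hJ0]; linarith
    _ = (d : ℝ) := mul_one _
end

section
/- For p ∈ (1, 2], the function φ(x) = (1/(2(p−1)))·‖x‖_p² is 1-strongly convex with respect to the ℓ^p norm on ℝ^d; moreover 0 ≤ φ(x) ≤ 1/(2(p−1)) for all ‖x‖_p ≤ 1. -/
open Real Set Filter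


-- AM-GM step
lemma amgm_rpow {a b r : ℝ} (ha : 0 < a) (hb : 0 < b) (hab : a * b ≤ 1) (hr : r ≤ 0) :
    (2:ℝ) ≤ a ^ r + b ^ r := by
  have h1 : (1:ℝ) ≤ (a*b) ^ (r/2) :=
    Real.one_le_rpow_of_pos_of_le_one_of_nonpos (by positivity) hab (by linarith)
  have h2 : (a*b) ^ (r/2) = a ^ (r/2) * b ^ (r/2) := Real.mul_rpow ha.le hb.le
  have h3 : 0 ≤ (a ^ (r/2) - b ^ (r/2))^2 := sq_nonneg _
  have h4 : a ^ (r/2) * a ^ (r/2) = a ^ r := by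
    rw [← Real.rpow_add ha]; ring_nf
  have h5 : b ^ (r/2) * b ^ (r/2) = b ^ r := by
    rw [← Real.rpow_add hb]; ring_nf
  nlinarith [sq_nonneg (a ^ (r/2) - b ^ (r/2))]

-- h >= 0
lemma step_h {p : ℝ} (hp1 : 1 < p) (hp2 : p ≤ 2) {t : ℝ} (ht0 : 0 ≤ t) (ht1 : t ≤ 1) :
    2 * (p-1) * t ≤ (1+t) ^ (p-1) - (1-t) ^ (p-1) := by
  set q := p - 1 with hq
  have hq0 : 0 < q := by simp [hq]; linarith
  have hq1 : q ≤ 1 := by simp [hq]; linarith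
  set h : ℝ → ℝ := fun t => (1+t) ^ q - (1-t) ^ q - 2*q*t with hh
  have hcont : ContinuousOn h (Icc 0 1) := by
    apply ContinuousOn.sub
    apply ContinuousOn.sub
    · exact (continuous_const.add continuous_id).continuousOn.rpow_const
        (fun x hx => Or.inr hq0.le)
    · exact (continuous_const.sub continuous_id).continuousOn.rpow_const
        (fun x hx => Or.inr hq0.le)
    · exact (continuous_const.mul continuous_id).continuousOn
  have hderiv : ∀ x ∈ Ioo (0:ℝ) 1, HasDerivAt h (q * (1+x)^(q-1) + q * (1-x)^(q-1) - 2*q) x := by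
    intro x hx
    have h1 : HasDerivAt (fun t : ℝ => (1+t) ^ q) (q * (1+x)^(q-1)) x := by
      have := ((hasDerivAt_id x).const_add 1).rpow_const (p := q) (Or.inl (by simp only [id_eq]; nlinarith [hx.1]))
      simpa using this
    have h2 : HasDerivAt (fun t : ℝ => (1-t) ^ q) (-(q * (1-x)^(q-1))) x := by
      have := ((hasDerivAt_id x).const_sub 1).rpow_const (p := q) (Or.inl (by simp only [id_eq]; nlinarith [hx.2]))
      simp only [id_eq] at this
      convert this using 1; ring
    have h3 : HasDerivAt (fun t : ℝ => 2*q*t) (2*q) x := by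
      simpa using (hasDerivAt_id x).const_mul (2*q)
    have := (h1.sub h2).sub h3
    refine this.congr_deriv ?_; ring
  have hmono : MonotoneOn h (Icc 0 1) := by
    apply monotoneOn_of_deriv_nonneg (convex_Icc 0 1) hcont
    · intro x hx
      rw [interior_Icc] at hx
      exact ((hderiv x hx).differentiableAt).differentiableWithinAt
    · intro x hx
      rw [interior_Icc] at hx
      rw [(hderiv x hx).deriv]
      have := amgm_rpow (a := 1+x) (b := 1-x) (r := q-1)
        (by nlinarith [hx.1]) (by nlinarith [hx.2]) (by nlinarith [hx.1, hx.2]) (by linarith)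
      nlinarith
  have h0 : h 0 = 0 := by simp [hh]
  have := hmono (left_mem_Icc.mpr zero_le_one) ⟨ht0, ht1⟩ ht0
  rw [h0] at this
  simp only [hh] at this
  linarith


lemma step_f {p : ℝ} (hp1 : 1 < p) (hp2 : p ≤ 2) {t : ℝ} (ht0 : 0 ≤ t) (ht1 : t ≤ 1) :
    2 * (1 + (p-1)*t^2) ^ (p/2) ≤ (1+t) ^ p + (1-t) ^ p := by
  have hq0 : 0 < p - 1 := by linarith
  set f : ℝ → ℝ := fun t => (1+t) ^ p + (1-t) ^ p - 2 * (1 + (p-1)*t^2) ^ (p/2) with hf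
  have hp0 : (0:ℝ) < p := by linarith
  have hcont : ContinuousOn f (Icc 0 1) := by
    apply ContinuousOn.sub
    apply ContinuousOn.add
    · exact (continuous_const.add continuous_id).continuousOn.rpow_const
        (fun x _ => Or.inr hp0.le)
    · exact (continuous_const.sub continuous_id).continuousOn.rpow_const
        (fun x _ => Or.inr hp0.le)
    · exact (continuousOn_const.mul (((continuous_const.add (continuous_const.mul (continuous_pow 2)))).continuousOn.rpow_const (fun x _ => Or.inr (by linarith))))
  have hbase : ∀ x : ℝ, (0:ℝ) < 1 + (p-1)*x^2 := by
    intro x; nlinarith [sq_nonneg x]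
  have hderiv : ∀ x ∈ Ioo (0:ℝ) 1, HasDerivAt f
      (p * (1+x)^(p-1) - p * (1-x)^(p-1) - 2*(p-1)*x*p*(1 + (p-1)*x^2)^(p/2-1)) x := by
    intro x hx
    have h1 : HasDerivAt (fun t : ℝ => (1+t) ^ p) (p * (1+x)^(p-1)) x := by
      have := ((hasDerivAt_id x).const_add 1).rpow_const (p := p)
        (Or.inl (by simp only [id_eq]; nlinarith [hx.1]))
      simpa using this
    have h2 : HasDerivAt (fun t : ℝ => (1-t) ^ p) (-(p * (1-x)^(p-1))) x := by
      have := ((hasDerivAt_id x).const_sub 1).rpow_const (p := p)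
        (Or.inl (by simp only [id_eq]; nlinarith [hx.2]))
      simp only [id_eq] at this
      convert this using 1; ring
    have h3 : HasDerivAt (fun t : ℝ => 2 * (1 + (p-1)*t^2) ^ (p/2))
        (2 * ((p-1)*(2*x) * (p/2) * (1 + (p-1)*x^2)^(p/2-1))) x := by
      have hb : HasDerivAt (fun t : ℝ => 1 + (p-1)*t^2) ((p-1)*(2*x)) x := by
        have := (hasDerivAt_pow 2 x).const_mul (p-1)
        have := this.const_add 1
        exact this.congr_deriv (by push_cast; ring)
      exact (hb.rpow_const (Or.inl (hbase x).ne')).const_mul 2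
    have := (h1.add h2).sub h3
    refine this.congr_deriv ?_; ring
  have hmono : MonotoneOn f (Icc 0 1) := by
    apply monotoneOn_of_deriv_nonneg (convex_Icc 0 1) hcont
    · intro x hx
      rw [interior_Icc] at hx
      exact ((hderiv x hx).differentiableAt).differentiableWithinAt
    · intro x hx
      rw [interior_Icc] at hx
      rw [(hderiv x hx).deriv]
      have hsh := step_h hp1 hp2 hx.1.le hx.2.le
      have hle1 : (1 + (p-1)*x^2) ^ (p/2-1) ≤ 1 :=
        Real.rpow_le_one_of_one_le_of_nonpos (by nlinarith [sq_nonneg x]) (by linarith)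
      have hx0 : (0:ℝ) ≤ 2*(p-1)*x*p := mul_nonneg (mul_nonneg (by linarith) hx.1.le) hp0.le
      have hrp : 0 ≤ (1 + (p-1)*x^2) ^ (p/2-1) := Real.rpow_nonneg (hbase x).le _
      nlinarith [mul_le_mul_of_nonneg_left hle1 hx0]
  have h0 : f 0 = 0 := by
    simp only [hf]
    norm_num
  have := hmono (left_mem_Icc.mpr zero_le_one) ⟨ht0, ht1⟩ ht0
  rw [h0] at this
  simp only [hf] at this
  linarith


lemma abs_rpow_pair (p α β : ℝ) :
    |α+β| ^ p + |α-β| ^ p = (|α|+|β|) ^ p + |(|α|-|β|)| ^ p := by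
  rcases le_total 0 α with hα | hα <;> rcases le_total 0 β with hβ | hβ
  · rw [abs_of_nonneg hα, abs_of_nonneg hβ, abs_of_nonneg (add_nonneg hα hβ)]
  · rw [abs_of_nonneg hα, abs_of_nonpos hβ,
      show α - -β = α + β from by ring, show α + -β = α - β from by ring,
      abs_of_nonneg (show (0:ℝ) ≤ α - β from by linarith)]
    exact add_comm _ _
  · rw [abs_of_nonpos hα, abs_of_nonneg hβ,
      show -α - β = -(α+β) from by ring, abs_neg,
      show -α + β = -(α-β) from by ring,
      abs_of_nonpos (show α - β ≤ 0 from by linarith)]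
    exact add_comm _ _
  · rw [abs_of_nonpos hα, abs_of_nonpos hβ, abs_of_nonpos (show α+β ≤ 0 from by linarith),
      show -α + -β = -(α+β) from by ring, show -α - -β = -(α-β) from by ring, abs_neg]

lemma scalar_key {p : ℝ} (hp1 : 1 < p) (hp2 : p ≤ 2) (α β : ℝ) :
    2 * (α^2 + (p-1)*β^2) ^ (p/2) ≤ |α+β| ^ p + |α-β| ^ p := by
  have hq0 : (0:ℝ) < p - 1 := by linarith
  have hp0 : (0:ℝ) < p := by linarith
  set a := max |α| |β| with hadef
  set b := min |α| |β| with hbdef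
  have hb0 : 0 ≤ b := le_min (abs_nonneg _) (abs_nonneg _)
  have hba : b ≤ a := min_le_max
  have h1 : α^2 + (p-1)*β^2 ≤ a^2 + (p-1)*b^2 := by
    rcases le_total |β| |α| with h | h
    · rw [hadef, hbdef, max_eq_left h, min_eq_right h, sq_abs, sq_abs]
    · rw [hadef, hbdef, max_eq_right h, min_eq_left h, sq_abs, sq_abs]
      have h2 : α^2 ≤ β^2 := by nlinarith [sq_abs α, sq_abs β, abs_nonneg α]
      nlinarith
  have h2 : |α+β| ^ p + |α-β| ^ p = (a+b) ^ p + (a-b) ^ p := by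
    rw [abs_rpow_pair p α β, hadef, hbdef, max_add_min, max_sub_min_eq_abs, abs_sub_comm]
  rw [h2]
  have ha0 : 0 ≤ a := hb0.trans hba
  rcases eq_or_lt_of_le ha0 with ha | ha
  · -- a = 0, so α = β = 0
    have hα : α = 0 := by
      have h01 : |α| ≤ 0 := by rw [ha, hadef]; exact le_sup_left
      exact abs_nonpos_iff.mp h01
    have hβ : β = 0 := by
      have h01 : |β| ≤ 0 := by rw [ha, hadef]; exact le_sup_right
      exact abs_nonpos_iff.mp h01
    subst hα; subst hβ
    have hb : b = 0 := le_antisymm (by rw [ha]; exact hba) hb0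
    rw [← ha, hb]
    norm_num
    rw [Real.zero_rpow (by positivity : p/2 ≠ 0), Real.zero_rpow (by positivity : p ≠ 0)]
    norm_num
  · set t := b / a with htdef
    have ht0 : 0 ≤ t := div_nonneg hb0 ha.le
    have ht1 : t ≤ 1 := (div_le_one ha).mpr hba
    have key := step_f hp1 hp2 ht0 ht1
    have e0 : a^2 + (p-1)*b^2 = a^2 * (1 + (p-1)*t^2) := by
      rw [htdef]; field_simp
    have eap : ((a:ℝ)^2) ^ (p/2) = a ^ p := by
      rw [← Real.rpow_natCast a 2, ← Real.rpow_mul ha.le]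
      congr 1
      push_cast
      ring
    have e1 : 2 * (a^2 + (p-1)*b^2) ^ (p/2) = a ^ p * (2 * (1 + (p-1)*t^2) ^ (p/2)) := by
      rw [e0, Real.mul_rpow (by positivity) (by positivity), eap]
      ring
    have e2 : a ^ p * (1+t) ^ p = (a+b) ^ p := by
      rw [← Real.mul_rpow ha.le (by linarith)]
      congr 1
      rw [htdef]; field_simp
    have e3 : a ^ p * (1-t) ^ p = (a-b) ^ p := by
      rw [← Real.mul_rpow ha.le (by linarith)]
      congr 1
      rw [htdef]; field_simp
    have step1 : 2 * (α^2 + (p-1)*β^2) ^ (p/2) ≤ 2 * (a^2 + (p-1)*b^2) ^ (p/2) := by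
      have := Real.rpow_le_rpow (by positivity) h1 (by positivity : (0:ℝ) ≤ p/2)
      linarith
    have step2 : a ^ p * (2 * (1 + (p-1)*t^2) ^ (p/2)) ≤ a ^ p * ((1+t) ^ p + (1-t) ^ p) :=
      mul_le_mul_of_nonneg_left key (Real.rpow_nonneg ha.le p)
    calc 2 * (α^2 + (p-1)*β^2) ^ (p/2) ≤ 2 * (a^2 + (p-1)*b^2) ^ (p/2) := step1
      _ = a ^ p * (2 * (1 + (p-1)*t^2) ^ (p/2)) := e1
      _ ≤ a ^ p * ((1+t) ^ p + (1-t) ^ p) := step2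
      _ = (a+b) ^ p + (a-b) ^ p := by rw [mul_add, e2, e3]


lemma jensen2 {e w₁ w₂ z₁ z₂ : ℝ} (he : 1 ≤ e) (hw₁ : 0 ≤ w₁) (hw₂ : 0 ≤ w₂)
    (hw : w₁ + w₂ = 1) (hz₁ : 0 ≤ z₁) (hz₂ : 0 ≤ z₂) :
    (w₁ * z₁ + w₂ * z₂) ^ e ≤ w₁ * z₁ ^ e + w₂ * z₂ ^ e := by
  have := Real.rpow_arith_mean_le_arith_mean_rpow Finset.univ ![w₁, w₂] ![z₁, z₂]
    (by intro i _; fin_cases i <;> simpa) (by simp [Fin.sum_univ_two, hw])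
    (by intro i _; fin_cases i <;> simpa) he
  simpa [Fin.sum_univ_two] using this

lemma concave2 {r w₁ w₂ c₁ c₂ : ℝ} (hr0 : 0 < r) (hr1 : r ≤ 1) (hw₁ : 0 ≤ w₁) (hw₂ : 0 ≤ w₂)
    (hw : w₁ + w₂ = 1) (hc₁ : 0 ≤ c₁) (hc₂ : 0 ≤ c₂) :
    w₁ * c₁ ^ r + w₂ * c₂ ^ r ≤ (w₁ * c₁ + w₂ * c₂) ^ r := by
  have he : 1 ≤ 1/r := (one_le_div hr0).mpr hr1
  have key := jensen2 he hw₁ hw₂ hw (Real.rpow_nonneg hc₁ r) (Real.rpow_nonneg hc₂ r)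
  have c1 : (c₁ ^ r) ^ (1/r) = c₁ := by
    rw [← Real.rpow_mul hc₁, mul_one_div, div_self hr0.ne', Real.rpow_one]
  have c2 : (c₂ ^ r) ^ (1/r) = c₂ := by
    rw [← Real.rpow_mul hc₂, mul_one_div, div_self hr0.ne', Real.rpow_one]
  rw [c1, c2] at key
  have h0 : 0 ≤ w₁ * c₁ ^ r + w₂ * c₂ ^ r := by positivity
  have := Real.rpow_le_rpow (Real.rpow_nonneg h0 (1/r)) key hr0.le
  rwa [← Real.rpow_mul h0, one_div, inv_mul_cancel₀ hr0.ne', Real.rpow_one] at this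

lemma rev_minkowski {d : ℕ} {r : ℝ} (hr0 : 0 < r) (hr1 : r ≤ 1) (A B : Fin d → ℝ)
    (hA : ∀ i, 0 ≤ A i) (hB : ∀ i, 0 ≤ B i) :
    (∑ i, A i ^ r) ^ (1/r) + (∑ i, B i ^ r) ^ (1/r) ≤ (∑ i, (A i + B i) ^ r) ^ (1/r) := by
  set X := (∑ i, A i ^ r) ^ (1/r) with hX
  set Y := (∑ i, B i ^ r) ^ (1/r) with hY
  have hSA : 0 ≤ ∑ i, A i ^ r := Finset.sum_nonneg fun i _ => Real.rpow_nonneg (hA i) r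
  have hSB : 0 ≤ ∑ i, B i ^ r := Finset.sum_nonneg fun i _ => Real.rpow_nonneg (hB i) r
  have hX0 : 0 ≤ X := Real.rpow_nonneg hSA _
  have hY0 : 0 ≤ Y := Real.rpow_nonneg hSB _
  have hXr : X ^ r = ∑ i, A i ^ r := by
    rw [hX, ← Real.rpow_mul hSA, one_div, inv_mul_cancel₀ hr0.ne', Real.rpow_one]
  have hYr : Y ^ r = ∑ i, B i ^ r := by
    rw [hY, ← Real.rpow_mul hSB, one_div, inv_mul_cancel₀ hr0.ne', Real.rpow_one]
  -- degenerate cases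
  rcases eq_or_lt_of_le hX0 with hX0' | hX0'
  · -- X = 0 : all A i = 0
    have hAz : ∀ i, A i = 0 := by
      intro i
      have : ∑ i, A i ^ r = 0 := by rw [← hXr, ← hX0', Real.zero_rpow hr0.ne']
      have hiz : A i ^ r = 0 := by
        have := (Finset.sum_eq_zero_iff_of_nonneg
          (fun i _ => Real.rpow_nonneg (hA i) r)).mp this i (Finset.mem_univ i)
        exact this
      by_contra hne
      have : 0 < A i := lt_of_le_of_ne (hA i) (Ne.symm hne)
      exact absurd hiz (by positivity)
    rw [← hX0']
    simp only [zero_add]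
    apply Real.rpow_le_rpow hSB _ (by positivity)
    apply Finset.sum_le_sum
    intro i _
    rw [hAz i, zero_add]
  rcases eq_or_lt_of_le hY0 with hY0' | hY0'
  · have hBz : ∀ i, B i = 0 := by
      intro i
      have : ∑ i, B i ^ r = 0 := by rw [← hYr, ← hY0', Real.zero_rpow hr0.ne']
      have hiz : B i ^ r = 0 :=
        (Finset.sum_eq_zero_iff_of_nonneg
          (fun i _ => Real.rpow_nonneg (hB i) r)).mp this i (Finset.mem_univ i)
      by_contra hne
      have : 0 < B i := lt_of_le_of_ne (hB i) (Ne.symm hne)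
      exact absurd hiz (by positivity)
    rw [← hY0']
    simp only [add_zero]
    apply Real.rpow_le_rpow hSA _ (by positivity)
    apply Finset.sum_le_sum
    intro i _
    rw [hBz i, add_zero]
  -- main case X, Y > 0
  have hXY : 0 < X + Y := by linarith
  have key : (X+Y) ^ r ≤ ∑ i, (A i + B i) ^ r := by
    have pointwise : ∀ i, (X+Y) ^ r * ((X/(X+Y)) * (A i ^ r / X ^ r)
        + (Y/(X+Y)) * (B i ^ r / Y ^ r)) ≤ (A i + B i) ^ r := by
      intro i
      have hc := concave2 hr0 hr1 (w₁ := X/(X+Y)) (w₂ := Y/(X+Y))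
        (c₁ := A i * (X+Y) / X) (c₂ := B i * (X+Y) / Y)
        (by positivity) (by positivity) (by field_simp)
        (div_nonneg (mul_nonneg (hA i) hXY.le) hX0'.le) (div_nonneg (mul_nonneg (hB i) hXY.le) hY0'.le)
      have e1 : X/(X+Y) * (A i * (X+Y) / X) + Y/(X+Y) * (B i * (X+Y) / Y) = A i + B i := by
        field_simp
      rw [e1] at hc
      refine le_trans (le_of_eq ?_) hc
      have e2 : (A i * (X+Y) / X) ^ r = A i ^ r * (X+Y) ^ r / X ^ r := by
        rw [Real.div_rpow (mul_nonneg (hA i) hXY.le) hX0'.le, Real.mul_rpow (hA i) hXY.le]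
      have e3 : (B i * (X+Y) / Y) ^ r = B i ^ r * (X+Y) ^ r / Y ^ r := by
        rw [Real.div_rpow (mul_nonneg (hB i) hXY.le) hY0'.le, Real.mul_rpow (hB i) hXY.le]
      rw [e2, e3]
      ring
    have sum_le := Finset.sum_le_sum (fun i (_ : i ∈ Finset.univ) => pointwise i)
    rw [← Finset.mul_sum] at sum_le
    have e4 : ∑ i, ((X/(X+Y)) * (A i ^ r / X ^ r) + (Y/(X+Y)) * (B i ^ r / Y ^ r)) = 1 := by
      rw [Finset.sum_add_distrib, ← Finset.mul_sum, ← Finset.mul_sum]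
      rw [← Finset.sum_div, ← Finset.sum_div, ← hXr, ← hYr]
      have hXr0 : X ^ r ≠ 0 := by positivity
      have hYr0 : Y ^ r ≠ 0 := by positivity
      field_simp
    rw [e4, mul_one] at sum_le
    exact sum_le
  have := Real.rpow_le_rpow (by positivity) key (by positivity : (0:ℝ) ≤ 1/r)
  rwa [← Real.rpow_mul hXY.le, mul_one_div, div_self hr0.ne', Real.rpow_one] at this


lemma mid_ineq {d : ℕ} {p : ℝ} (hp1 : 1 < p) (hp2 : p ≤ 2) [Fact (1 ≤ ENNReal.ofReal p)]
    (u v : PiLp (ENNReal.ofReal p) (fun _ : Fin d => ℝ)) :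
    ‖u‖^2 + (p-1) * ‖v‖^2 ≤ (‖u+v‖^2 + ‖u-v‖^2)/2 := by
  have hp0 : (0:ℝ) < p := by linarith
  have hq0 : (0:ℝ) < p - 1 := by linarith
  have pt : (ENNReal.ofReal p).toReal = p := ENNReal.toReal_ofReal hp0.le
  have hnorm : ∀ w : PiLp (ENNReal.ofReal p) (fun _ : Fin d => ℝ),
      ‖w‖ = (∑ i, |w i| ^ p) ^ (1/p) := by
    intro w
    rw [PiLp.norm_eq_sum (by rw [pt]; exact hp0) w]
    simp [pt, Real.norm_eq_abs]
  set S : PiLp (ENNReal.ofReal p) (fun _ : Fin d => ℝ) → ℝ := fun w => ∑ i, |w i| ^ p with hS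
  have hSnn : ∀ w, 0 ≤ S w := fun w =>
    Finset.sum_nonneg fun i _ => Real.rpow_nonneg (abs_nonneg _) p
  have hsq : ∀ w, ‖w‖^2 = S w ^ (2/p) := by
    intro w
    rw [hnorm w, ← Real.rpow_natCast ((S w) ^ (1/p)) 2, ← Real.rpow_mul (hSnn w)]
    congr 1
    push_cast
    ring
  set r := p/2 with hr
  have hr0 : 0 < r := by rw [hr]; linarith
  have hr1 : r ≤ 1 := by rw [hr]; linarith
  have hrinv : 1/r = 2/p := by rw [hr]; field_simp
  set A : Fin d → ℝ := fun i => (u i)^2 with hA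
  set B : Fin d → ℝ := fun i => (p-1) * (v i)^2 with hB
  have hAnn : ∀ i, 0 ≤ A i := fun i => sq_nonneg _
  have hBnn : ∀ i, 0 ≤ B i := fun i => mul_nonneg hq0.le (sq_nonneg _)
  have eA : ∀ i, A i ^ r = |u i| ^ p := by
    intro i
    simp only [hA]
    rw [hr, ← sq_abs, ← Real.rpow_natCast |u i| 2, ← Real.rpow_mul (abs_nonneg _)]
    congr 1
    push_cast
    field_simp
  have eB : ∀ i, B i ^ r = (p-1) ^ r * |v i| ^ p := by
    intro i
    simp only [hB]
    rw [hr, Real.mul_rpow hq0.le (sq_nonneg _), ← sq_abs,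
      ← Real.rpow_natCast |v i| 2, ← Real.rpow_mul (abs_nonneg _)]
    congr 2
    push_cast
    field_simp
  have G1 : (∑ i, A i ^ r) ^ (1/r) = ‖u‖^2 := by
    rw [hrinv, hsq u]
    congr 1
    exact Finset.sum_congr rfl fun i _ => eA i
  have G2 : (∑ i, B i ^ r) ^ (1/r) = (p-1) * ‖v‖^2 := by
    have : (∑ i, B i ^ r) = (p-1)^r * S v := by
      rw [Finset.mul_sum]
      exact Finset.sum_congr rfl fun i _ => eB i
    rw [this, hrinv, Real.mul_rpow (Real.rpow_nonneg hq0.le r) (hSnn v),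
      ← Real.rpow_mul hq0.le, hsq v, hr]
    congr 2
    field_simp
    exact Real.rpow_one _
  have G3 := rev_minkowski hr0 hr1 A B hAnn hBnn
  rw [G1, G2] at G3
  have G4 : ∑ i, (A i + B i) ^ r ≤ (S (u+v) + S (u-v))/2 := by
    have pw : ∀ i, (A i + B i) ^ r ≤ (|u i + v i| ^ p + |u i - v i| ^ p)/2 := by
      intro i
      have := scalar_key hp1 hp2 (u i) (v i)
      simp only [hA, hB, hr]
      linarith
    calc ∑ i, (A i + B i)^r ≤ ∑ i, (|u i + v i|^p + |u i - v i|^p)/2 :=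
          Finset.sum_le_sum fun i _ => pw i
      _ = (S (u+v) + S (u-v))/2 := by
          rw [hS]
          simp only [PiLp.add_apply, PiLp.sub_apply]
          rw [← Finset.sum_div, Finset.sum_add_distrib]
  have G5 : (∑ i, (A i + B i) ^ r) ^ (1/r) ≤ ((S (u+v) + S (u-v))/2) ^ (2/p) := by
    rw [← hrinv]
    apply Real.rpow_le_rpow (Finset.sum_nonneg fun i _ =>
      Real.rpow_nonneg (add_nonneg (hAnn i) (hBnn i)) r) G4 (by positivity)
  have G6 : ((S (u+v) + S (u-v))/2) ^ (2/p) ≤ (‖u+v‖^2 + ‖u-v‖^2)/2 := by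
    have := jensen2 (e := 2/p) (w₁ := 1/2) (w₂ := 1/2) (z₁ := S (u+v)) (z₂ := S (u-v))
      (by rw [one_le_div hp0]; linarith) (by norm_num) (by norm_num) (by norm_num)
      (hSnn _) (hSnn _)
    calc ((S (u+v) + S (u-v))/2) ^ (2/p)
        = (1/2 * S (u+v) + 1/2 * S (u-v)) ^ (2/p) := by ring_nf
      _ ≤ 1/2 * S (u+v) ^ (2/p) + 1/2 * S (u-v) ^ (2/p) := this
      _ = (‖u+v‖^2 + ‖u-v‖^2)/2 := by rw [← hsq, ← hsq]; ring
  linarith [G3, G5.trans G6]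


lemma midpoint_to_convex {k : ℝ → ℝ} (hk : Continuous k)
    (hmid : ∀ s t : ℝ, k ((s+t)/2) ≤ (k s + k t)/2)
    {a b : ℝ} (ha : 0 ≤ a) (hb : 0 ≤ b) (hab : a + b = 1) (s t : ℝ) :
    k (a*s + b*t) ≤ a * k s + b * k t := by
  set φ : ℝ → ℝ := fun c => k (s + c*(t-s)) - (k s + c*(k t - k s)) with hφ
  have hφcont : Continuous φ := by
    apply Continuous.sub
    · exact hk.comp (continuous_const.add (continuous_id.mul continuous_const))
    · exact continuous_const.add (continuous_id.mul continuous_const)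
  have hφmid : ∀ x y : ℝ, φ ((x+y)/2) ≤ (φ x + φ y)/2 := by
    intro x y
    have h := hmid (s + x*(t-s)) (s + y*(t-s))
    have e : (s + x*(t-s) + (s + y*(t-s)))/2 = s + ((x+y)/2)*(t-s) := by ring
    rw [e] at h
    simp only [hφ]
    linarith
  have claim : ∀ n : ℕ, ∀ j : ℕ, j ≤ 2^n → φ ((j:ℝ) / 2^n) ≤ 0 := by
    intro n
    induction n with
    | zero =>
      intro j hj
      interval_cases j
      · simp [hφ]
      · simp [hφ]
    | succ n ih =>
      intro j hj
      rcases Nat.even_or_odd j with ⟨m, hm⟩ | ⟨m, hm⟩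
      · have hm' : m ≤ 2^n := by omega
        have e : (j:ℝ)/2^(n+1) = (m:ℝ)/2^n := by
          subst hm; push_cast; field_simp; ring
        rw [e]; exact ih m hm'
      · have hm1 : m ≤ 2^n := by omega
        have hm2 : m + 1 ≤ 2^n := by omega
        have e : (j:ℝ)/2^(n+1) = (((m:ℝ)/2^n) + ((m:ℝ)+1)/2^n)/2 := by
          subst hm; push_cast; field_simp; ring
        rw [e]
        have h1 := ih m hm1
        have h2 := ih (m+1) hm2
        push_cast at h2
        have := hφmid ((m:ℝ)/2^n) (((m:ℝ)+1)/2^n)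
        linarith
  have hb1 : b ≤ 1 := by linarith
  have hfinal : φ b ≤ 0 := by
    set c : ℕ → ℝ := fun n => (⌊b * 2^n⌋₊ : ℝ) / 2^n with hc
    have hub : ∀ n, c n ≤ b := by
      intro n
      rw [hc]
      rw [div_le_iff₀ (by positivity)]
      exact Nat.floor_le (by positivity)
    have hlb : ∀ n, b - (1/2)^n ≤ c n := by
      intro n
      have h2n : (0:ℝ) < 2^n := by positivity
      have hfl := Nat.lt_floor_add_one (b * 2^n)
      have he : (1/2:ℝ)^n * 2^n = 1 := by rw [← mul_pow]; norm_num
      show b - (1/2)^n ≤ (⌊b * 2^n⌋₊ : ℝ) / 2^n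
      rw [le_div_iff₀ h2n]
      nlinarith [hfl, he]
    have htend : Tendsto c atTop (nhds b) := by
      have h1 : Tendsto (fun n : ℕ => b - (1/2:ℝ)^n) atTop (nhds b) := by
        have := tendsto_pow_atTop_nhds_zero_of_lt_one (by norm_num : (0:ℝ) ≤ 1/2) (by norm_num)
        have := this.const_sub b
        simpa using this
      exact tendsto_of_tendsto_of_tendsto_of_le_of_le h1 tendsto_const_nhds hlb hub
    have hφle : ∀ n, φ (c n) ≤ 0 := by
      intro n
      apply claim n
      have : b * 2^n ≤ 2^n := by nlinarith [pow_pos (by norm_num : (0:ℝ) < 2) n]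
      calc ⌊b * 2^n⌋₊ ≤ ⌊((2^n : ℕ) : ℝ)⌋₊ := Nat.floor_le_floor (by push_cast; linarith)
        _ = 2^n := Nat.floor_natCast _
    have := ((hφcont.tendsto b).comp htend)
    exact le_of_tendsto this (Eventually.of_forall hφle)
  simp only [hφ] at hfinal
  have e : s + b*(t-s) = a*s + b*t := by
    have : a = 1 - b := by linarith
    rw [this]; ring
  rw [e] at hfinal
  have e2 : a * k s + b * k t = k s + b * (k t - k s) := by
    rw [show a = 1 - b from by linarith]; ring
  rw [e2]
  linarith


/-- For `p ∈ (1,2]`, the function `φ(x) = ‖x‖_p²/(2(p−1))` is `1`-strongly convex with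
respect to the `ℓ^p` norm on `ℝ^d`, and `0 ≤ φ(x) ≤ 1/(2(p−1))` whenever `‖x‖_p ≤ 1`. -/
theorem lp_strong_convexity_small_p
    (d : ℕ) (p : ℝ) (hp1 : 1 < p) (hp2 : p ≤ 2) [Fact (1 ≤ ENNReal.ofReal p)] :
    StrongConvexOn (Set.univ : Set (PiLp (ENNReal.ofReal p) (fun _ : Fin d => ℝ))) 1
        (fun x => ‖x‖ ^ 2 / (2 * (p - 1)))
    ∧ ∀ x : PiLp (ENNReal.ofReal p) (fun _ : Fin d => ℝ), ‖x‖ ≤ 1 →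
        0 ≤ ‖x‖ ^ 2 / (2 * (p - 1)) ∧ ‖x‖ ^ 2 / (2 * (p - 1)) ≤ 1 / (2 * (p - 1)) := by
  have hq0 : (0:ℝ) < p - 1 := by linarith
  have hN : (0:ℝ) < 2 * (p - 1) := by linarith
  constructor
  · constructor
    · exact convex_univ
    · intro x _ y _ a b ha hb hab
      -- key vector inequality
      have key : ‖a • x + b • y‖^2 ≤ a * ‖x‖^2 + b * ‖y‖^2 - (p-1) * a * b * ‖x - y‖^2 := by
        set C := ‖y - x‖^2 with hC
        set k : ℝ → ℝ := fun c => ‖x + c • (y - x)‖^2 - (p-1) * c^2 * C with hk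
        have hkcont : Continuous k := by
          apply Continuous.sub
          · exact ((continuous_const.add (continuous_id.smul continuous_const)).norm).pow 2
          · exact (continuous_const.mul (continuous_pow 2)).mul continuous_const
        have hkmid : ∀ s t : ℝ, k ((s+t)/2) ≤ (k s + k t)/2 := by
          intro s t
          have hmi := mid_ineq hp1 hp2 (x + ((s+t)/2) • (y - x)) (((t-s)/2) • (y - x))
          have e1 : x + ((s+t)/2) • (y - x) + ((t-s)/2) • (y - x) = x + t • (y - x) := by
            rw [add_assoc, ← add_smul, show (s+t)/2 + (t-s)/2 = t from by ring]
          have e2 : x + ((s+t)/2) • (y - x) - ((t-s)/2) • (y - x) = x + s • (y - x) := by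
            rw [add_sub_assoc, ← sub_smul, show (s+t)/2 - (t-s)/2 = s from by ring]
          have e3 : ‖(((t-s)/2) • (y - x) : PiLp (ENNReal.ofReal p) (fun _ : Fin d => ℝ))‖^2
              = ((t-s)/2)^2 * C := by
            rw [norm_smul, mul_pow, Real.norm_eq_abs, sq_abs, hC]
          rw [e1, e2, e3] at hmi
          simp only [hk]
          nlinarith [hmi]
        have hcv := midpoint_to_convex hkcont hkmid ha hb hab 0 1
        rw [show a * (0:ℝ) + b * 1 = b from by ring] at hcv
        have k0 : k 0 = ‖x‖^2 := by simp [hk]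
        have k1 : k 1 = ‖y‖^2 - (p-1) * C := by
          simp only [hk, one_smul, one_pow, mul_one]
          rw [add_sub_cancel]
        have kb : k b = ‖a • x + b • y‖^2 - (p-1) * b^2 * C := by
          simp only [hk]
          have e : x + b • (y - x) = a • x + b • y := by
            rw [show a = 1 - b from by linarith]
            module
          rw [e]
        rw [k0, k1, kb] at hcv
        have hC' : C = ‖x - y‖^2 := by rw [hC, norm_sub_rev]
        rw [hC'] at hcv
        have e4 : (p-1)*b*‖x - y‖^2*(a+b-1) = 0 := by rw [hab]; ring
        nlinarith [hcv, e4]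
      simp only [smul_eq_mul]
      rw [show a * (‖x‖^2 / (2*(p-1))) + b * (‖y‖^2 / (2*(p-1)))
          - a * b * ((1:ℝ)/2 * ‖x - y‖^2)
          = (a * ‖x‖^2 + b * ‖y‖^2 - (p-1) * a * b * ‖x - y‖^2) / (2*(p-1)) from by
        field_simp]
      exact (div_le_div_iff_of_pos_right hN).mpr key
  · intro x hx
    constructor
    · exact div_nonneg (by positivity) hN.le
    · have h1 : ‖x‖^2 ≤ 1 := by nlinarith [norm_nonneg x]
      exact (div_le_div_iff_of_pos_right hN).mpr h1
end
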